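/- arXiv:1608.05730 — 4 statements merged into one kernel-verified Lean document; each statement's English description precedes it below -/
import Mathlib

section
/- Let H_0 = (S,T;F_0) be a simple bigraph, r_S the rank function of a matroid on S, p_T a positively intersecting supermodular set-function on T, and m_T : T → ℤ. Then the set-function p_0 on subsets of V = S ∪ T (defined via ℋ_0, r_S, p_T, m_T and the degrees d_{H_0}) is positively T-intersecting supermodular. -/
open Finset

variable {α : Type*} [DecidableEq α]

/-- The number of edges of the bigraph with edge set `E` connecting `X ⊆ S` and `Y ⊆ T`. -/
def edgesBetween (E : Finset (α × α)) (X Y : Finset α) : ℕ :=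
  (E.filter (fun e => e.1 ∈ X ∧ e.2 ∈ Y)).card

/-- The set of neighbours (in `S`) of a subset `Z ⊆ T` in the bigraph with edge set `E`. -/
def nbrs (E : Finset (α × α)) (Z : Finset α) : Finset α :=
  (E.filter (fun e => e.2 ∈ Z)).image Prod.fst

/-- The degree of a node `v ∈ S` in the bigraph with edge set `E`. -/
def degS (E : Finset (α × α)) (v : α) : ℕ := (E.filter (fun e => e.1 = v)).card

/-- The degree of a node `v ∈ T` in the bigraph with edge set `E`. -/
def degT (E : Finset (α × α)) (v : α) : ℕ := (E.filter (fun e => e.2 = v)).card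

/-- `r` is the rank function of a matroid on the ground set `S`. -/
def IsRankFn (S : Finset α) (r : Finset α → ℕ) : Prop :=
  (∀ X, X ⊆ S → r X ≤ X.card) ∧
  (∀ X Y, X ⊆ Y → Y ⊆ S → r X ≤ r Y) ∧
  (∀ X Y, X ⊆ S → Y ⊆ S → r (X ∪ Y) + r (X ∩ Y) ≤ r X + r Y)

/-- `V' ∈ ℋ₀`: no arc of the orientation of `H₀` (from `S` to `T`) enters `V'`. -/
def memH₀ (F₀ : Finset (α × α)) (V' : Finset α) : Prop :=
  ∀ e ∈ F₀, e.2 ∈ V' → e.1 ∈ V'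

instance (F₀ : Finset (α × α)) (V' : Finset α) : Decidable (memH₀ F₀ V') := by
  unfold memH₀; infer_instance

/-- The set-function `p₀` of the paper:
`p₀(V') = max{p_T({y}) − r_S(X), m_T(y) − |X| + d_{H₀}(y)}` if `V' = X ∪ {y} ∈ ℋ₀`
with `X ⊆ S`, `y ∈ T`; `p₀(V') = p_T(Y) − r_S(X)` if `V' = X ∪ Y ∈ ℋ₀` with `X ⊆ S`,
`Y ⊆ T`, `|Y| ≥ 2`; and `p₀(V') = 0` otherwise. -/
def p₀ (S T : Finset α) (F₀ : Finset (α × α)) (rS : Finset α → ℕ)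
    (pT : Finset α → ℤ) (m : α → ℤ) (V' : Finset α) : ℤ :=
  if V' ⊆ S ∪ T ∧ memH₀ F₀ V' then
    if (V' ∩ T).card = 1 then
      max (pT (V' ∩ T) - (rS (V' ∩ S) : ℤ))
        ((∑ y ∈ V' ∩ T, m y) - ((V' ∩ S).card : ℤ) + ∑ y ∈ V' ∩ T, (degT F₀ y : ℤ))
    else if 2 ≤ (V' ∩ T).card then pT (V' ∩ T) - (rS (V' ∩ S) : ℤ)
    else 0
  else 0

/-- `V_s = {v ∈ V − s : sv ∉ F₀}`. -/
def Vs (S T : Finset α) (F₀ : Finset (α × α)) (s : α) : Finset α :=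
  ((S ∪ T).erase s).filter (fun v => (s, v) ∉ F₀)

/-- The set-function `p₁` of the paper: `p₁(V_s) = m_S(s)` for `s ∈ S`
(such an `s` is unique when it exists), and `p₁(V') = p₀(V')` otherwise. -/
def p₁ (S T : Finset α) (F₀ : Finset (α × α)) (rS : Finset α → ℕ)
    (pT : Finset α → ℤ) (m : α → ℤ) (V' : Finset α) : ℤ :=
  if ∃ s ∈ S, V' = Vs S T F₀ s then
    ∑ s ∈ S.filter (fun s => V' = Vs S T F₀ s), m s
  else p₀ S T F₀ rS pT m V'

/-- Condition (★) of the paper: for every `Y ⊆ T`, `X ⊆ S` and every subpartition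
`𝒯 = {T₁, …, T_q}` of `T − Y` into nonempty sets,
`m̃(X) + m̃(Y) − d_{G₀}(X,Y) + ∑ᵢ (p_T(Tᵢ) − r_S(X ∪ Γ_{H₀}(Tᵢ))) ≤ γ`,
where `G₀ = (S ×ˢ T) \ F₀` is the bipartite complement of `H₀`. -/
def StarCond (S T : Finset α) (F₀ : Finset (α × α)) (rS : Finset α → ℕ)
    (pT : Finset α → ℤ) (m : α → ℤ) (γ : ℤ) : Prop :=
  ∀ X ⊆ S, ∀ Y ⊆ T, ∀ 𝒯 : Finset (Finset α),
    (∀ Ti ∈ 𝒯, Ti.Nonempty ∧ Ti ⊆ T \ Y) →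
    (∀ T₁ ∈ 𝒯, ∀ T₂ ∈ 𝒯, T₁ ≠ T₂ → Disjoint T₁ T₂) →
    (∑ v ∈ X, m v) + (∑ v ∈ Y, m v)
        - (edgesBetween ((S ×ˢ T) \ F₀) X Y : ℤ)
        + ∑ Ti ∈ 𝒯, (pT Ti - (rS (X ∪ nbrs F₀ Ti) : ℤ)) ≤ γ

/-!
Write `f = rankPart` and `g = degreePart`, i.e. `f(V') = p_T(V' ∩ T) − r_S(V' ∩ S)` and
`g(V') = m_T(V' ∩ T) − |V' ∩ S| + d_{H₀}(V' ∩ T)`; on `ℋ₀` the function `p₀` is `max f g` when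
`|V' ∩ T| = 1` and `f` when `|V' ∩ T| ≥ 2`. The family `ℋ₀` is closed under `∩` and `∪`, and for
`T`-intersecting `X, Y` both `X ∩ Y` and `X ∪ Y` meet `T`, so `p₀ ≥ f` on both. If `p₀(X)` and
`p₀(Y)` are both attained by `f`, the supermodular inequality follows from that of `p_T` and the
submodularity of `r_S`. If `p₀(X)` is attained by `g`, then `X ∩ T` is a single node lying in `Y`,
so `X ∩ Y` has the same `T`-part as `X`, and `g(X) + f(Y) ≤ g(X ∩ Y) + f(X ∪ Y)` reduces to
`r_S(A ∪ B) ≤ r_S(B) + |A − B|`; if both are attained by `g`, then `X ∩ T = Y ∩ T` and `g` is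
modular.
-/

def PosIntersectingSupermodularOn (T : Finset α) (p : Finset α → ℤ) : Prop :=
  ∀ X Y : Finset α, X ⊆ T → Y ⊆ T → (X ∩ Y).Nonempty →
    0 < p X → 0 < p Y → p X + p Y ≤ p (X ∩ Y) + p (X ∪ Y)

lemma memH₀_inter {F₀ : Finset (α × α)} {X Y : Finset α}
    (hX : memH₀ F₀ X) (hY : memH₀ F₀ Y) : memH₀ F₀ (X ∩ Y) := fun e he h =>
  mem_inter.2 ⟨hX e he (mem_inter.1 h).1, hY e he (mem_inter.1 h).2⟩

lemma memH₀_union {F₀ : Finset (α × α)} {X Y : Finset α}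
    (hX : memH₀ F₀ X) (hY : memH₀ F₀ Y) : memH₀ F₀ (X ∪ Y) := fun e he h =>
  (mem_union.1 h).elim (fun hx => mem_union_left _ (hX e he hx))
    (fun hy => mem_union_right _ (hY e he hy))

lemma IsRankFn.rank_union_add_card_inter_le {S : Finset α} {r : Finset α → ℕ}
    (hr : IsRankFn S r) {A B : Finset α} (hA : A ⊆ S) (hB : B ⊆ S) :
    r (A ∪ B) + (A ∩ B).card ≤ r B + A.card := by
  have hAB : A \ B ⊆ S := sdiff_subset.trans hA
  have hsub := hr.2.2 B (A \ B) hB hAB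
  rw [union_sdiff_self_eq_union, union_comm] at hsub
  have := hr.1 _ hAB
  have := card_sdiff_add_card_inter A B
  omega

lemma inter_inter_eq_of_inter_subset {X Y T : Finset α} (h : X ∩ T ⊆ Y) :
    X ∩ Y ∩ T = X ∩ T := by
  rw [inter_right_comm, inter_eq_left.2 h]

lemma union_inter_eq_of_inter_subset {X Y T : Finset α} (h : X ∩ T ⊆ Y) :
    (X ∪ Y) ∩ T = Y ∩ T := by
  rw [union_inter_distrib_right, union_eq_right.2 (subset_inter h inter_subset_right)]

lemma subset_of_card_eq_one_of_inter_nonempty {A B : Finset α} (hA : A.card = 1)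
    (h : (A ∩ B).Nonempty) : A ⊆ B := by
  obtain ⟨a, rfl⟩ := card_eq_one.1 hA
  obtain ⟨b, hb⟩ := h
  rw [mem_inter, mem_singleton] at hb
  simpa [hb.1] using hb.2

section Parts

variable (S T : Finset α) (F₀ : Finset (α × α)) (rS : Finset α → ℕ) (pT : Finset α → ℤ)
  (m : α → ℤ)

def rankPart (V' : Finset α) : ℤ := pT (V' ∩ T) - (rS (V' ∩ S) : ℤ)

def degreePart (V' : Finset α) : ℤ :=
  (∑ y ∈ V' ∩ T, m y) - ((V' ∩ S).card : ℤ) + ∑ y ∈ V' ∩ T, (degT F₀ y : ℤ)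

variable {S T F₀ rS pT m}

lemma rankPart_supermodular (hrS : IsRankFn S rS) (hpT : PosIntersectingSupermodularOn T pT)
    {X Y : Finset α} (hXY : (X ∩ Y ∩ T).Nonempty)
    (hX : 0 < rankPart S T rS pT X) (hY : 0 < rankPart S T rS pT Y) :
    rankPart S T rS pT X + rankPart S T rS pT Y ≤
      rankPart S T rS pT (X ∩ Y) + rankPart S T rS pT (X ∪ Y) := by
  unfold rankPart at *
  rw [inter_inter_distrib_right] at hXY ⊢
  rw [inter_inter_distrib_right X Y S, union_inter_distrib_right, union_inter_distrib_right]
  have hpT_le := hpT _ _ inter_subset_right inter_subset_right hXY (by omega) (by omega)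
  have hrS_le := hrS.2.2 (X ∩ S) (Y ∩ S) inter_subset_right inter_subset_right
  omega

lemma degreePart_add_rankPart_le (hrS : IsRankFn S rS) {X Y : Finset α} (hXY : X ∩ T ⊆ Y) :
    degreePart S T F₀ m X + rankPart S T rS pT Y ≤
      degreePart S T F₀ m (X ∩ Y) + rankPart S T rS pT (X ∪ Y) := by
  have hrank := hrS.rank_union_add_card_inter_le (A := X ∩ S) (B := Y ∩ S)
    inter_subset_right inter_subset_right
  unfold degreePart rankPart
  rw [inter_inter_eq_of_inter_subset hXY, union_inter_eq_of_inter_subset hXY,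
    inter_inter_distrib_right X Y S, union_inter_distrib_right]
  omega

lemma degreePart_modular {X Y : Finset α} (hXY : X ∩ T ⊆ Y) (hYX : Y ∩ T ⊆ X) :
    degreePart S T F₀ m X + degreePart S T F₀ m Y =
      degreePart S T F₀ m (X ∩ Y) + degreePart S T F₀ m (X ∪ Y) := by
  have hT : X ∩ T = Y ∩ T :=
    (subset_inter hXY inter_subset_right).antisymm (subset_inter hYX inter_subset_right)
  have hinter : X ∩ Y ∩ T = X ∩ T := by rw [inter_inter_distrib_right, ← hT, inter_self]
  have hunion : (X ∪ Y) ∩ T = X ∩ T := by rw [union_inter_distrib_right, ← hT, union_self]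
  have hcard := card_inter_add_card_union (X ∩ S) (Y ∩ S)
  unfold degreePart
  rw [hinter, hunion, ← hT, inter_inter_distrib_right X Y S, union_inter_distrib_right]
  omega

lemma rankPart_le_p₀ {V' : Finset α} (hV' : V' ⊆ S ∪ T) (hH : memH₀ F₀ V')
    (hT : (V' ∩ T).Nonempty) : rankPart S T rS pT V' ≤ p₀ S T F₀ rS pT m V' := by
  have hpos := hT.card_pos
  unfold p₀
  rw [if_pos ⟨hV', hH⟩]
  split_ifs with h1 h2
  · exact le_max_left _ _
  · exact le_rfl
  · omega

lemma degreePart_le_p₀ {V' : Finset α} (hV' : V' ⊆ S ∪ T) (hH : memH₀ F₀ V')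
    (hT : (V' ∩ T).card = 1) : degreePart S T F₀ m V' ≤ p₀ S T F₀ rS pT m V' := by
  unfold p₀
  rw [if_pos ⟨hV', hH⟩, if_pos hT]
  exact le_max_right _ _

lemma p₀_pos_cases {V' : Finset α} (h : 0 < p₀ S T F₀ rS pT m V') :
    memH₀ F₀ V' ∧
      ((V' ∩ T).Nonempty ∧ p₀ S T F₀ rS pT m V' = rankPart S T rS pT V' ∨
        (V' ∩ T).card = 1 ∧ p₀ S T F₀ rS pT m V' = degreePart S T F₀ m V') := by
  unfold p₀ at h ⊢
  split_ifs at h ⊢ with hH h1 h2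
  · refine ⟨hH.2, ?_⟩
    rcases max_choice (rankPart S T rS pT V') (degreePart S T F₀ m V') with hmax | hmax
    · exact Or.inl ⟨card_pos.1 (by omega), hmax⟩
    · exact Or.inr ⟨h1, hmax⟩
  · exact ⟨hH.2, Or.inl ⟨card_pos.1 (by omega), rfl⟩⟩
  all_goals omega

end Parts

section Bounds

variable {S T : Finset α} {F₀ : Finset (α × α)} {rS : Finset α → ℕ} {pT : Finset α → ℤ}
  {m : α → ℤ} {X Y : Finset α}

lemma rankPart_add_rankPart_le_p₀ (hrS : IsRankFn S rS) (hpT : PosIntersectingSupermodularOn T pT)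
    (hX : X ⊆ S ∪ T) (hY : Y ⊆ S ∪ T) (hHX : memH₀ F₀ X) (hHY : memH₀ F₀ Y)
    (hXY : (X ∩ Y ∩ T).Nonempty)
    (hposX : 0 < rankPart S T rS pT X) (hposY : 0 < rankPart S T rS pT Y) :
    rankPart S T rS pT X + rankPart S T rS pT Y ≤
      p₀ S T F₀ rS pT m (X ∩ Y) + p₀ S T F₀ rS pT m (X ∪ Y) := by
  have hunionT : ((X ∪ Y) ∩ T).Nonempty :=
    hXY.mono (inter_subset_inter_right (inter_subset_left.trans subset_union_left))
  have := rankPart_supermodular hrS hpT hXY hposX hposY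
  have := rankPart_le_p₀ (rS := rS) (pT := pT) (m := m) (inter_subset_left.trans hX)
    (memH₀_inter hHX hHY) hXY
  have := rankPart_le_p₀ (rS := rS) (pT := pT) (m := m) (union_subset hX hY)
    (memH₀_union hHX hHY) hunionT
  omega

lemma degreePart_add_rankPart_le_p₀ (hrS : IsRankFn S rS)
    (hX : X ⊆ S ∪ T) (hY : Y ⊆ S ∪ T) (hHX : memH₀ F₀ X) (hHY : memH₀ F₀ Y)
    (hXY : (X ∩ Y ∩ T).Nonempty) (hX1 : (X ∩ T).card = 1) :
    degreePart S T F₀ m X + rankPart S T rS pT Y ≤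
      p₀ S T F₀ rS pT m (X ∩ Y) + p₀ S T F₀ rS pT m (X ∪ Y) := by
  have hXT : X ∩ T ⊆ Y :=
    subset_of_card_eq_one_of_inter_nonempty hX1 (by rwa [inter_right_comm])
  have := degreePart_add_rankPart_le (F₀ := F₀) (pT := pT) (m := m) hrS hXT
  have := degreePart_le_p₀ (rS := rS) (pT := pT) (m := m) (inter_subset_left.trans hX)
    (memH₀_inter hHX hHY) (by rwa [inter_inter_eq_of_inter_subset hXT])
  have := rankPart_le_p₀ (rS := rS) (pT := pT) (m := m) (union_subset hX hY)
    (memH₀_union hHX hHY) (by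
      rw [union_inter_eq_of_inter_subset hXT]
      exact hXY.mono (inter_subset_inter_right inter_subset_right))
  omega

lemma degreePart_add_degreePart_le_p₀
    (hX : X ⊆ S ∪ T) (hY : Y ⊆ S ∪ T) (hHX : memH₀ F₀ X) (hHY : memH₀ F₀ Y)
    (hXY : (X ∩ Y ∩ T).Nonempty) (hX1 : (X ∩ T).card = 1) (hY1 : (Y ∩ T).card = 1) :
    degreePart S T F₀ m X + degreePart S T F₀ m Y ≤
      p₀ S T F₀ rS pT m (X ∩ Y) + p₀ S T F₀ rS pT m (X ∪ Y) := by
  have hXT : X ∩ T ⊆ Y :=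
    subset_of_card_eq_one_of_inter_nonempty hX1 (by rwa [inter_right_comm])
  have hYT : Y ∩ T ⊆ X :=
    subset_of_card_eq_one_of_inter_nonempty hY1 (by rwa [inter_right_comm, inter_comm Y])
  have := degreePart_modular (S := S) (F₀ := F₀) (m := m) hXT hYT
  have := degreePart_le_p₀ (rS := rS) (pT := pT) (m := m) (inter_subset_left.trans hX)
    (memH₀_inter hHX hHY) (by rwa [inter_inter_eq_of_inter_subset hXT])
  have := degreePart_le_p₀ (rS := rS) (pT := pT) (m := m) (union_subset hX hY)
    (memH₀_union hHX hHY) (by rwa [union_inter_eq_of_inter_subset hXT])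
  omega

end Bounds

theorem p₀_positively_T_intersecting_supermodular_general
    (S T : Finset α)
    (F₀ : Finset (α × α))
    (rS : Finset α → ℕ) (hrS : IsRankFn S rS)
    (pT : Finset α → ℤ)
    -- `p_T` is positively intersecting supermodular on `T`
    (hpT : ∀ X Y : Finset α, X ⊆ T → Y ⊆ T → (X ∩ Y).Nonempty →
      0 < pT X → 0 < pT Y → pT X + pT Y ≤ pT (X ∩ Y) + pT (X ∪ Y))
    (m : α → ℤ) :
    ∀ X Y : Finset α, X ⊆ S ∪ T → Y ⊆ S ∪ T → ¬ X ⊆ Y → ¬ Y ⊆ X →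
      (X ∩ Y ∩ T).Nonempty →
      0 < p₀ S T F₀ rS pT m X → 0 < p₀ S T F₀ rS pT m Y →
      p₀ S T F₀ rS pT m X + p₀ S T F₀ rS pT m Y ≤
        p₀ S T F₀ rS pT m (X ∩ Y) + p₀ S T F₀ rS pT m (X ∪ Y) := by
  intro X Y hX hY _ _ hXY hpX hpY
  obtain ⟨hHX, hcaseX⟩ := p₀_pos_cases hpX
  obtain ⟨hHY, hcaseY⟩ := p₀_pos_cases hpY
  rcases hcaseX with ⟨-, hpX_eq⟩ | ⟨hX1, hpX_eq⟩ <;>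
    rcases hcaseY with ⟨-, hpY_eq⟩ | ⟨hY1, hpY_eq⟩ <;> rw [hpX_eq, hpY_eq]
  · exact rankPart_add_rankPart_le_p₀ hrS hpT hX hY hHX hHY hXY (hpX_eq ▸ hpX) (hpY_eq ▸ hpY)
  · rw [add_comm, inter_comm X, union_comm X]
    exact degreePart_add_rankPart_le_p₀ hrS hY hX hHY hHX (by rwa [inter_comm Y]) hY1
  · exact degreePart_add_rankPart_le_p₀ hrS hX hY hHX hHY hXY hX1
  · exact degreePart_add_degreePart_le_p₀ hX hY hHX hHY hXY hX1 hY1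

/-- **Lemma 3 of the paper.** The set-function `p₀` is positively `T`-intersecting
supermodular: the supermodular inequality holds for any two non-comparable subsets
`X, Y` of `V = S ∪ T` with `X ∩ Y ∩ T ≠ ∅`, `p₀(X) > 0` and `p₀(Y) > 0`. -/
theorem p₀_positively_T_intersecting_supermodular
    (S T : Finset α) (hST : Disjoint S T) (hS : S.Nonempty) (hT : T.Nonempty)
    (F₀ : Finset (α × α)) (hF₀ : F₀ ⊆ S ×ˢ T)
    (rS : Finset α → ℕ) (hrS : IsRankFn S rS)
    (pT : Finset α → ℤ)
    -- `p_T` is positively intersecting supermodular on `T`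
    (hpT : ∀ X Y : Finset α, X ⊆ T → Y ⊆ T → (X ∩ Y).Nonempty →
      0 < pT X → 0 < pT Y → pT X + pT Y ≤ pT (X ∩ Y) + pT (X ∪ Y))
    (m : α → ℤ) :
    ∀ X Y : Finset α, X ⊆ S ∪ T → Y ⊆ S ∪ T → ¬ X ⊆ Y → ¬ Y ⊆ X →
      (X ∩ Y ∩ T).Nonempty →
      0 < p₀ S T F₀ rS pT m X → 0 < p₀ S T F₀ rS pT m Y →
      p₀ S T F₀ rS pT m X + p₀ S T F₀ rS pT m Y ≤
        p₀ S T F₀ rS pT m (X ∩ Y) + p₀ S T F₀ rS pT m (X ∪ Y) :=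
  p₀_positively_T_intersecting_supermodular_general S T F₀ rS hrS pT hpT m
end

section
/- Let H_0 = (S,T;F_0) be a simple bigraph with bipartite complement G_0, r_S the rank function of a matroid on S, p_T a positively intersecting supermodular set-function on T, and m_V = (m_S, m_T) a degree-specification with m̃_S(S) = m̃_T(T) = γ. Let p_0 and p_1 be the associated set-functions and V_s = {v ∈ V − s : sv ∉ F_0} for s ∈ S. If Condition (★) holds, then p_1(V_s) = m_S(s) ≥ p_0(V_s) for every s ∈ S. -/
open Finset

variable {α : Type*} [DecidableEq α]

section Bigraph

variable {E F : Finset (α × α)} {S T X Y : Finset α}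

@[simp]
lemma edgesBetween_empty_right : edgesBetween E X ∅ = 0 := by
  simp [edgesBetween]

lemma edgesBetween_sdiff_add (hFE : F ⊆ E) :
    edgesBetween (E \ F) X Y + edgesBetween F X Y = edgesBetween E X Y := by
  unfold edgesBetween
  have hsdiff : (E \ F).filter (fun e => e.1 ∈ X ∧ e.2 ∈ Y) =
      E.filter (fun e => e.1 ∈ X ∧ e.2 ∈ Y) \ F.filter (fun e => e.1 ∈ X ∧ e.2 ∈ Y) := by
    grind
  rw [hsdiff]
  exact card_sdiff_add_card_eq_card (filter_subset_filter _ hFE)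

lemma edgesBetween_product (hX : X ⊆ S) (hY : Y ⊆ T) :
    edgesBetween (S ×ˢ T) X Y = #X * #Y := by
  rw [edgesBetween, filter_product (· ∈ X) (· ∈ Y), filter_mem_eq_inter, filter_mem_eq_inter,
    inter_eq_right.2 hX, inter_eq_right.2 hY, card_product]

lemma degT_eq_edgesBetween {y : α} (hX : nbrs E {y} ⊆ X) :
    degT E y = edgesBetween E X {y} := by
  rw [degT, edgesBetween]
  congr 1
  refine filter_congr fun e he => ⟨fun hey => ⟨hX ?_, hey ▸ mem_singleton_self _⟩, fun h => ?_⟩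
  · exact mem_image.2 ⟨e, mem_filter.2 ⟨he, hey ▸ mem_singleton_self _⟩, rfl⟩
  · exact mem_singleton.1 h.2

lemma nbrs_subset_erase (hF : F ⊆ S ×ˢ T) {s : α} {Z : Finset α}
    (hZ : ∀ t ∈ Z, (s, t) ∉ F) : nbrs F Z ⊆ S.erase s := by
  simp only [subset_iff, nbrs, mem_image, mem_filter, mem_erase]
  rintro _ ⟨e, ⟨he, heZ⟩, rfl⟩
  refine ⟨fun hes => hZ e.2 heZ ?_, (mem_product.1 (hF he)).1⟩
  rwa [← hes]

end Bigraph

section Vs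

variable {S T : Finset α} {F₀ : Finset (α × α)} {s : α}

lemma Vs_subset : Vs S T F₀ s ⊆ S ∪ T :=
  (filter_subset _ _).trans (erase_subset _ _)

lemma Vs_inter_left (hST : Disjoint S T) (hF₀ : F₀ ⊆ S ×ˢ T) :
    Vs S T F₀ s ∩ S = S.erase s := by
  ext v
  simp only [Vs, mem_inter, mem_filter, mem_erase, mem_union]
  refine ⟨fun ⟨⟨⟨hvs, _⟩, _⟩, hvS⟩ => ⟨hvs, hvS⟩, fun ⟨hvs, hvS⟩ => ⟨⟨⟨hvs, .inl hvS⟩, ?_⟩, hvS⟩⟩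
  exact fun hsv => disjoint_left.1 hST hvS (mem_product.1 (hF₀ hsv)).2

lemma Vs_inter_right (hST : Disjoint S T) (hs : s ∈ S) :
    Vs S T F₀ s ∩ T = T.filter (fun t => (s, t) ∉ F₀) := by
  ext v
  simp only [Vs, mem_inter, mem_filter, mem_erase, mem_union]
  refine ⟨fun ⟨⟨_, hsv⟩, hvT⟩ => ⟨hvT, hsv⟩, fun ⟨hvT, hsv⟩ => ⟨⟨⟨?_, .inr hvT⟩, hsv⟩, hvT⟩⟩
  rintro rfl
  exact disjoint_left.1 hST hs hvT

lemma Vs_injOn (hST : Disjoint S T) (hF₀ : F₀ ⊆ S ×ˢ T) : Set.InjOn (Vs S T F₀) S :=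
  fun s hs s' hs' h => erase_injOn S hs hs' <| by
    rw [← Vs_inter_left hST hF₀, h, Vs_inter_left hST hF₀]

lemma memH₀_Vs (hST : Disjoint S T) (hF₀ : F₀ ⊆ S ×ˢ T) : memH₀ F₀ (Vs S T F₀ s) := by
  intro e he he₂
  have heS : e.1 ∈ S := (mem_product.1 (hF₀ he)).1
  have hes : e.1 ≠ s := by
    rintro hes
    exact (mem_filter.1 he₂).2 (hes ▸ he)
  have : e.1 ∈ Vs S T F₀ s ∩ S := by
    rw [Vs_inter_left hST hF₀]
    exact mem_erase.2 ⟨hes, heS⟩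
  exact (mem_inter.1 this).1

lemma p₁_Vs (hST : Disjoint S T) (hF₀ : F₀ ⊆ S ×ˢ T) (rS : Finset α → ℕ)
    (pT : Finset α → ℤ) (m : α → ℤ) (hs : s ∈ S) :
    p₁ S T F₀ rS pT m (Vs S T F₀ s) = m s := by
  have hunique : S.filter (fun s' => Vs S T F₀ s = Vs S T F₀ s') = {s} := by
    ext s'
    simp only [mem_filter, mem_singleton]
    exact ⟨fun ⟨hs', h⟩ => (Vs_injOn hST hF₀ hs hs' h).symm, fun h => ⟨h ▸ hs, h ▸ rfl⟩⟩
  rw [p₁, if_pos ⟨s, hs, rfl⟩, hunique, sum_singleton]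

end Vs

namespace StarCond

variable {S T : Finset α} {F₀ : Finset (α × α)} {rS : Finset α → ℕ} {pT : Finset α → ℤ}
  {m : α → ℤ} {γ : ℤ} {X Y Z : Finset α}

lemma le_of_no_parts (h : StarCond S T F₀ rS pT m γ) (hX : X ⊆ S) (hY : Y ⊆ T) :
    ∑ v ∈ X, m v + ∑ v ∈ Y, m v - (edgesBetween ((S ×ˢ T) \ F₀) X Y : ℤ) ≤ γ := by
  simpa using h X hX Y hY ∅ (by simp) (by simp)

lemma le_of_one_part (h : StarCond S T F₀ rS pT m γ) (hX : X ⊆ S) (hZ : Z ⊆ T)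
    (hZne : Z.Nonempty) : ∑ v ∈ X, m v + (pT Z - rS (X ∪ nbrs F₀ Z)) ≤ γ := by
  simpa using
    h X hX ∅ (empty_subset T) {Z} (by simpa using ⟨hZne, hZ⟩) (by simp)

end StarCond

/-- At `V_s = (S - s) ∪ N` with `N = T - Γ_{H₀}(s)`, each of the three values `p₀` can take is
bounded by an instance of (★) with `X = S - s`, whose `m`-weight is `γ - m(s)`:
`0` by `Y = 𝒯 = ∅`, `p_T(N) - r_S(S - s)` by `𝒯 = {N}`, and, for `N = {y}`,
`m(y) - |S - s| + d_{H₀}(y)` by `Y = {y}`, as `d_{G₀}(S - s, y) + d_{H₀}(y) = |S - s|`. -/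
lemma p₀_Vs_le {S T : Finset α} (hST : Disjoint S T) {F₀ : Finset (α × α)}
    (hF₀ : F₀ ⊆ S ×ˢ T) {rS : Finset α → ℕ} {pT : Finset α → ℤ} {m : α → ℤ} {γ : ℤ}
    (hγS : ∑ v ∈ S, m v = γ) (hstar : StarCond S T F₀ rS pT m γ) {s : α} (hs : s ∈ S) :
    p₀ S T F₀ rS pT m (Vs S T F₀ s) ≤ m s := by
  rw [p₀, if_pos ⟨Vs_subset, memH₀_Vs hST hF₀⟩, Vs_inter_right hST hs, Vs_inter_left hST hF₀]
  set N := T.filter (fun t => (s, t) ∉ F₀)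
  have hXS : S.erase s ⊆ S := erase_subset s S
  have hmX : ∑ v ∈ S.erase s, m v = γ - m s := by rw [sum_erase_eq_sub hs, hγS]
  have hm_nonneg : 0 ≤ m s := by
    have := hstar.le_of_no_parts hXS (empty_subset T)
    simp only [sum_empty, edgesBetween_empty_right, Nat.cast_zero, add_zero, sub_zero] at this
    linarith
  have hpN : N.Nonempty → pT N - rS (S.erase s) ≤ m s := by
    intro hN
    have := hstar.le_of_one_part hXS (filter_subset _ T) hN
    rw [union_eq_left.2 (nbrs_subset_erase hF₀ fun t ht => (mem_filter.1 ht).2)] at this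
    linarith
  split_ifs with hN₁ hN₂
  · obtain ⟨y, hy⟩ := card_eq_one.1 hN₁
    have hyN : y ∈ N := hy ▸ mem_singleton_self y
    have hyT : y ∈ T := (mem_filter.1 hyN).1
    refine max_le (hpN ⟨y, hyN⟩) ?_
    have hdeg : (edgesBetween ((S ×ˢ T) \ F₀) (S.erase s) {y} : ℤ) + degT F₀ y
        = #(S.erase s) := by
      norm_cast
      rw [degT_eq_edgesBetween (nbrs_subset_erase hF₀ (by simpa using (mem_filter.1 hyN).2)),
        edgesBetween_sdiff_add hF₀, edgesBetween_product hXS (singleton_subset_iff.2 hyT),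
        card_singleton, mul_one]
    have := hstar.le_of_no_parts hXS (singleton_subset_iff.2 hyT)
    rw [sum_singleton] at this
    rw [hy, sum_singleton, sum_singleton]
    linarith
  · exact hpN (card_pos.1 (by omega))
  · exact hm_nonneg

theorem p₁_eq_mS_ge_p₀_on_Vs_general
    (S T : Finset α) (hST : Disjoint S T)
    (F₀ : Finset (α × α)) (hF₀ : F₀ ⊆ S ×ˢ T)
    (rS : Finset α → ℕ)
    (pT : Finset α → ℤ)
    (m : α → ℤ) (γ : ℤ)
    (hγS : ∑ v ∈ S, m v = γ)
    (hstar : StarCond S T F₀ rS pT m γ) :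
    ∀ s ∈ S, p₁ S T F₀ rS pT m (Vs S T F₀ s) = m s ∧
      p₀ S T F₀ rS pT m (Vs S T F₀ s) ≤ m s :=
  fun _ hs => ⟨p₁_Vs hST hF₀ rS pT m hs, p₀_Vs_le hST hF₀ hγS hstar hs⟩

/-- **Claim 5 of the paper.** If Condition (★) holds, then
`p₁(V_s) = m_S(s) ≥ p₀(V_s)` for every `s ∈ S`. -/
theorem p₁_eq_mS_ge_p₀_on_Vs
    (S T : Finset α) (hST : Disjoint S T) (hS : S.Nonempty) (hT : T.Nonempty)
    (F₀ : Finset (α × α)) (hF₀ : F₀ ⊆ S ×ˢ T)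
    (rS : Finset α → ℕ) (hrS : IsRankFn S rS)
    (pT : Finset α → ℤ)
    -- `p_T` is positively intersecting supermodular on `T`
    (hpT : ∀ X Y : Finset α, X ⊆ T → Y ⊆ T → (X ∩ Y).Nonempty →
      0 < pT X → 0 < pT Y → pT X + pT Y ≤ pT (X ∩ Y) + pT (X ∪ Y))
    (m : α → ℤ) (γ : ℤ)
    (hγS : ∑ v ∈ S, m v = γ) (hγT : ∑ v ∈ T, m v = γ)
    (hstar : StarCond S T F₀ rS pT m γ) :
    ∀ s ∈ S, p₁ S T F₀ rS pT m (Vs S T F₀ s) = m s ∧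
      p₀ S T F₀ rS pT m (Vs S T F₀ s) ≤ m s :=
  p₁_eq_mS_ge_p₀_on_Vs_general S T hST F₀ hF₀ rS pT m γ hγS hstar
end

section
/- Let H_0 = (S,T;F_0) be a simple bigraph with bipartite complement G_0, r_S the rank function of a matroid on S, p_T a positively intersecting supermodular set-function on T, and m_V = (m_S, m_T) a degree-specification with m̃_S(S) = m̃_T(T) = γ satisfying Condition (★). If p_1(V') > 0 for a set V' ⊆ V, then some arc of the orientation of G_0 from S to T enters V' (equivalently, there exist s ∈ S − V' and t ∈ V' ∩ T with st ∉ F_0). -/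
/-!
Suppose no arc of `G₀` enters `V'`. If `V' = V_s` with `m_S(s) > 0`, then `s ∉ V_s` while every
`t ∈ T` with `st ∉ F₀` lies in `V_s`; so `s` is joined in `H₀` to all of `T`, and (★) with
`X = {s}`, `Y = T` forces `m_S(s) ≤ 0`. Otherwise `p₀(V') > 0`, so `V' ∈ ℋ₀` meets `T` in some `y`;
every `s ∈ S − V'` would give an arc `sy` of `H₀` entering `V'`, hence `S ⊆ V'`. Then (★) with
`X = S` bounds both terms of `p₀(V')` by `0`: take `Y = ∅, 𝒯 = {V' ∩ T}` for `p_T(V' ∩ T) − r_S(S)`,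
and `Y = {y}, 𝒯 = ∅` for `m_T(y) − |S| + d_{H₀}(y)`, using `d_{G₀}(S, y) + d_{H₀}(y) = |S|`.
-/

open Finset

variable {α : Type*} [DecidableEq α]

lemma edgesBetween_eq_zero_of_forall_mem {S T : Finset α} {F₀ : Finset (α × α)}
    {X Y : Finset α} (h : ∀ x ∈ X, ∀ y ∈ Y, (x, y) ∈ F₀) :
    edgesBetween ((S ×ˢ T) \ F₀) X Y = 0 := by
  simp only [edgesBetween, card_eq_zero, filter_eq_empty_iff, mem_sdiff, not_and]
  rintro ⟨x, y⟩ ⟨-, hxy⟩ hx hy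
  exact hxy (h x hx y hy)

lemma edgesBetween_compl_add_degT {S T : Finset α} {F₀ : Finset (α × α)}
    (hF₀ : F₀ ⊆ S ×ˢ T) {y : α} (hy : y ∈ T) :
    edgesBetween ((S ×ˢ T) \ F₀) S {y} + degT F₀ y = #S := by
  have hcompl : ((S ×ˢ T) \ F₀).filter (fun e => e.1 ∈ S ∧ e.2 ∈ ({y} : Finset α))
      = (S ×ˢ {y}) \ F₀ := by
    ext ⟨a, b⟩; simp only [mem_filter, mem_sdiff, mem_product, mem_singleton]; grind
  have hdeg : F₀.filter (fun e => e.2 = y) = (S ×ˢ {y}) ∩ F₀ := by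
    ext ⟨a, b⟩; have := @hF₀ (a, b)
    simp only [mem_filter, mem_inter, mem_product, mem_singleton] at this ⊢; grind
  rw [edgesBetween, degT, hcompl, hdeg, card_sdiff_add_card_inter, card_product,
    card_singleton, mul_one]

lemma nbrs_subset_left {S T : Finset α} {F₀ : Finset (α × α)} (hF₀ : F₀ ⊆ S ×ˢ T)
    (Z : Finset α) : nbrs F₀ Z ⊆ S := by
  simp only [nbrs, image_subset_iff, mem_filter]
  exact fun e he => (mem_product.mp (hF₀ he.1)).1

namespace StarCond

variable {S T : Finset α} {F₀ : Finset (α × α)} {rS : Finset α → ℕ} {pT : Finset α → ℤ}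
  {m : α → ℤ} {γ : ℤ}

lemma m_nonpos_of_forall_mem (hstar : StarCond S T F₀ rS pT m γ) (hγT : ∑ v ∈ T, m v = γ)
    {s : α} (hs : s ∈ S) (hall : ∀ t ∈ T, (s, t) ∈ F₀) : m s ≤ 0 := by
  have key := hstar {s} (singleton_subset_iff.mpr hs) T Subset.rfl ∅ (by simp) (by simp)
  rw [edgesBetween_eq_zero_of_forall_mem (by simpa using hall)] at key
  simp only [sum_singleton, hγT, sum_empty] at key
  omega

lemma pT_le_rS (hstar : StarCond S T F₀ rS pT m γ) (hγS : ∑ v ∈ S, m v = γ)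
    (hF₀ : F₀ ⊆ S ×ˢ T) {Y : Finset α} (hYT : Y ⊆ T) (hY : Y.Nonempty) :
    pT Y ≤ rS S := by
  have key := hstar S Subset.rfl ∅ (empty_subset T) {Y}
    (by simpa [hY] using hYT) (by simp)
  rw [edgesBetween, filter_false_of_mem (by simp), sum_singleton,
    union_eq_left.mpr (nbrs_subset_left hF₀ Y)] at key
  simp only [hγS, sum_empty, card_empty] at key
  omega

lemma m_sub_card_add_degT_nonpos (hstar : StarCond S T F₀ rS pT m γ)
    (hγS : ∑ v ∈ S, m v = γ) (hF₀ : F₀ ⊆ S ×ˢ T) {y : α} (hy : y ∈ T) :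
    m y - #S + degT F₀ y ≤ 0 := by
  have key := hstar S Subset.rfl {y} (singleton_subset_iff.mpr hy) ∅ (by simp) (by simp)
  have hcount := edgesBetween_compl_add_degT hF₀ hy
  simp only [hγS, sum_singleton, sum_empty] at key
  omega

lemma p₀_nonpos_of_subset (hstar : StarCond S T F₀ rS pT m γ) (hγS : ∑ v ∈ S, m v = γ)
    (hF₀ : F₀ ⊆ S ×ˢ T) {V' : Finset α} (hSV' : S ⊆ V') : p₀ S T F₀ rS pT m V' ≤ 0 := by
  have hV'S : V' ∩ S = S := inter_eq_right.mpr hSV'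
  unfold p₀
  split_ifs with _ h1 h2
  · obtain ⟨y, hy⟩ := card_eq_one.mp h1
    have hyT : y ∈ T := (mem_inter.mp (hy ▸ mem_singleton_self y)).2
    rw [hV'S, hy, sum_singleton, sum_singleton]
    exact max_le (sub_nonpos.mpr (hstar.pT_le_rS hγS hF₀ (by simpa using hyT) (by simp)))
      (hstar.m_sub_card_add_degT_nonpos hγS hF₀ hyT)
  · rw [hV'S]
    exact sub_nonpos.mpr (hstar.pT_le_rS hγS hF₀ inter_subset_right (card_pos.mp (by omega)))
  all_goals exact le_rfl

end StarCond

lemma memH₀_and_inter_nonempty_of_p₀_pos {S T : Finset α} {F₀ : Finset (α × α)}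
    {rS : Finset α → ℕ} {pT : Finset α → ℤ} {m : α → ℤ} {V' : Finset α}
    (hpos : 0 < p₀ S T F₀ rS pT m V') : memH₀ F₀ V' ∧ (V' ∩ T).Nonempty := by
  unfold p₀ at hpos
  split_ifs at hpos with h0
  · exact ⟨h0.2, card_pos.mp (by omega)⟩
  · exact ⟨h0.2, card_pos.mp (by omega)⟩
  all_goals exact absurd hpos (lt_irrefl 0)

lemma mem_Vs {S T : Finset α} (hST : Disjoint S T) (F₀ : Finset (α × α)) {s t : α}
    (hs : s ∈ S) (ht : t ∈ T) (hst : (s, t) ∉ F₀) : t ∈ Vs S T F₀ s := by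
  simp only [Vs, mem_filter, mem_erase, mem_union]
  exact ⟨⟨fun h => disjoint_left.mp hST hs (h ▸ ht), Or.inr ht⟩, hst⟩

lemma self_notMem_Vs (S T : Finset α) (F₀ : Finset (α × α)) (s : α) : s ∉ Vs S T F₀ s := by
  simp [Vs]

theorem G₀_covers_sets_with_positive_p₁_general
    (S T : Finset α) (hST : Disjoint S T)
    (F₀ : Finset (α × α)) (hF₀ : F₀ ⊆ S ×ˢ T)
    (rS : Finset α → ℕ)
    (pT : Finset α → ℤ)
    (m : α → ℤ) (γ : ℤ)
    (hγS : ∑ v ∈ S, m v = γ) (hγT : ∑ v ∈ T, m v = γ)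
    (hstar : StarCond S T F₀ rS pT m γ) :
    ∀ V' : Finset α, V' ⊆ S ∪ T → 0 < p₁ S T F₀ rS pT m V' →
      ∃ s ∈ S, s ∉ V' ∧ ∃ t ∈ T, t ∈ V' ∧ (s, t) ∉ F₀ := by
  intro V' _ hpos
  by_contra! hcon
  unfold p₁ at hpos
  split_ifs at hpos
  · obtain ⟨s, hs, hms⟩ : ∃ s ∈ S.filter (fun s => V' = Vs S T F₀ s), 0 < m s := by
      by_contra! h
      exact (sum_nonpos h).not_gt hpos
    obtain ⟨hsS, rfl⟩ := mem_filter.mp hs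
    refine (hstar.m_nonpos_of_forall_mem hγT hsS fun t ht => ?_).not_gt hms
    by_contra hst
    exact hst (hcon s hsS (self_notMem_Vs S T F₀ s) t ht (mem_Vs hST F₀ hsS ht hst))
  · obtain ⟨hH, y, hy⟩ := memH₀_and_inter_nonempty_of_p₀_pos hpos
    obtain ⟨hyV', hyT⟩ := mem_inter.mp hy
    have hSV' : S ⊆ V' := fun s hs => by
      by_contra hsV'
      exact hsV' (hH _ (hcon s hs hsV' y hyT hyV') hyV')
    exact (hstar.p₀_nonpos_of_subset hγS hF₀ hSV').not_gt hpos

/-- **Claim 7 of the paper.** Under Condition (★), if `p₁(V') > 0` for a set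
`V' ⊆ V = S ∪ T`, then some arc of the orientation of `G₀` (the bipartite complement
of `H₀`) from `S` to `T` enters `V'`: there are `s ∈ S − V'` and `t ∈ V' ∩ T`
with `st ∉ F₀`. -/
theorem G₀_covers_sets_with_positive_p₁
    (S T : Finset α) (hST : Disjoint S T) (hS : S.Nonempty) (hT : T.Nonempty)
    (F₀ : Finset (α × α)) (hF₀ : F₀ ⊆ S ×ˢ T)
    (rS : Finset α → ℕ) (hrS : IsRankFn S rS)
    (pT : Finset α → ℤ)
    -- `p_T` is positively intersecting supermodular on `T`
    (hpT : ∀ X Y : Finset α, X ⊆ T → Y ⊆ T → (X ∩ Y).Nonempty →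
      0 < pT X → 0 < pT Y → pT X + pT Y ≤ pT (X ∩ Y) + pT (X ∪ Y))
    (m : α → ℤ) (γ : ℤ)
    (hγS : ∑ v ∈ S, m v = γ) (hγT : ∑ v ∈ T, m v = γ)
    (hstar : StarCond S T F₀ rS pT m γ) :
    ∀ V' : Finset α, V' ⊆ S ∪ T → 0 < p₁ S T F₀ rS pT m V' →
      ∃ s ∈ S, s ∉ V' ∧ ∃ t ∈ T, t ∈ V' ∧ (s, t) ∉ F₀ :=
  G₀_covers_sets_with_positive_p₁_general S T hST F₀ hF₀ rS pT m γ hγS hγT hstar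
end

section
/- A simple bigraph G_0 = (S,T;E_0) has a subgraph fitting a degree-specification (m_S, m_T) with m̃_S(S) = m̃_T(T) = γ if and only if m̃_S(X) + m̃_T(Y) − d_{G_0}(X,Y) ≤ γ holds for every X ⊆ S and Y ⊆ T. -/
open Finset

variable {α : Type*} [DecidableEq α]

/-!
Necessity is double counting: the edges of a fitting `E` that meet `X` or `Y` number
`m̃(X) + m̃(Y) - d_E(X,Y) ≤ |E| = γ`, and `d_E ≤ d_{E₀}`.

Sufficiency is Hall's theorem applied to a gadget. Each edge `e ∈ E₀` gets a left and a right
copy, each `t ∈ T` gets `m t` slots on the left and each `s ∈ S` gets `m s` slots on the right.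
The left copy of `e` may go to its own right copy (`e` unused) or to a slot of `e.1` (`e` used);
a slot of `t` must take the right copy of an edge at `t`, which pushes that edge's left copy onto
a slot, so the edge is used. Hall's condition for the left side is the hypothesis with `X`
replaced by `S \ X`. A matching saturating the left side gives `E ⊆ E₀` with `degS ≤ m` on `S`
and `degT ≥ m` on `T`, and as both sides sum to `γ` all these inequalities are equalities.
-/

lemma sum_degS_eq_card_filter (E : Finset (α × α)) (X : Finset α) :
    ∑ v ∈ X, degS E v = #(E.filter fun e => e.1 ∈ X) :=
  sum_card_fiberwise_eq_card_filter E X Prod.fst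

lemma sum_degT_eq_card_filter (E : Finset (α × α)) (Y : Finset α) :
    ∑ v ∈ Y, degT E v = #(E.filter fun e => e.2 ∈ Y) :=
  sum_card_fiberwise_eq_card_filter E Y Prod.snd

lemma card_eq_sum_degS {E : Finset (α × α)} {S T : Finset α} (hE : E ⊆ S ×ˢ T) :
    #E = ∑ v ∈ S, degS E v := by
  rw [sum_degS_eq_card_filter, filter_true_of_mem fun e he => (mem_product.mp (hE he)).1]

lemma card_eq_sum_degT {E : Finset (α × α)} {S T : Finset α} (hE : E ⊆ S ×ˢ T) :
    #E = ∑ v ∈ T, degT E v := by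
  rw [sum_degT_eq_card_filter, filter_true_of_mem fun e he => (mem_product.mp (hE he)).2]

lemma edgesBetween_mono {E E' : Finset (α × α)} (h : E ⊆ E') (X Y : Finset α) :
    edgesBetween E X Y ≤ edgesBetween E' X Y :=
  card_le_card (filter_subset_filter _ h)

lemma sum_degS_add_sum_degT_le (E : Finset (α × α)) (X Y : Finset α) :
    ∑ v ∈ X, degS E v + ∑ v ∈ Y, degT E v ≤ #E + edgesBetween E X Y := by
  rw [sum_degS_eq_card_filter, sum_degT_eq_card_filter, ← card_union_add_card_inter,
    ← filter_and]
  exact Nat.add_le_add_right (card_le_card (union_subset (filter_subset _ _) (filter_subset _ _))) _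

lemma sum_add_sum_sub_edgesBetween_le {S T : Finset α} {E₀ E : Finset (α × α)} (hE : E ⊆ E₀)
    (hE₀ : E₀ ⊆ S ×ˢ T) {m : α → ℤ} (hS : ∀ s ∈ S, (degS E s : ℤ) = m s)
    (hT : ∀ t ∈ T, (degT E t : ℤ) = m t) {X Y : Finset α} (hX : X ⊆ S) (hY : Y ⊆ T) :
    ∑ v ∈ X, m v + ∑ v ∈ Y, m v - edgesBetween E₀ X Y ≤ ∑ v ∈ S, m v := by
  have hcount := sum_degS_add_sum_degT_le E X Y
  have hmono := edgesBetween_mono hE X Y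
  rw [card_eq_sum_degS (hE.trans hE₀)] at hcount
  rw [← sum_congr rfl fun v hv => hS v (hX hv), ← sum_congr rfl fun v hv => hT v (hY hv),
    ← sum_congr rfl hS]
  simp only [← Nat.cast_sum]
  omega

namespace Ore

variable {ι : Type*}

def slots (m : ι → ℕ) (W : Finset ι) : Finset (Σ _ : ι, ℕ) :=
  W.sigma fun v => range (m v)

@[simp]
lemma mem_slots {m : ι → ℕ} {W : Finset ι} {c : Σ _ : ι, ℕ} :
    c ∈ slots m W ↔ c.1 ∈ W ∧ c.2 < m c.1 := by
  simp [slots]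

lemma card_slots (m : ι → ℕ) (W : Finset ι) : #(slots m W) = ∑ v ∈ W, m v := by
  simp [slots, card_sigma]

/-- `.inl e` is a copy of the edge `e` and `.inr ⟨v, i⟩` the `i`-th slot of `v`; the left side
`E₀.disjSum (slots m T)` and the right side `E₀.disjSum (slots m S)` share this type. -/
abbrev Vertex (α : Type*) := (α × α) ⊕ (Σ _ : α, ℕ)

def gadgetNbr (E₀ : Finset (α × α)) (m : α → ℕ) : Vertex α → Finset (Vertex α)
  | .inl e => insert (.inl e) ((slots m {e.1}).map .inr)
  | .inr c => (E₀.filter fun e => e.2 = c.1).map .inl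

lemma card_le_card_biUnion_gadgetNbr {S T : Finset α} {E₀ : Finset (α × α)}
    (hE₀ : ∀ e ∈ E₀, e.1 ∈ S) {m : α → ℕ}
    (hcond : ∀ X ⊆ S, ∀ Y ⊆ T, ∑ v ∈ Y, m v ≤ ∑ v ∈ X, m v + edgesBetween E₀ (S \ X) Y)
    {s : Finset (Vertex α)} (hs : s ⊆ E₀.disjSum (slots m T)) :
    #s ≤ #(s.biUnion (gadgetNbr E₀ m)) := by
  set F := s.toLeft
  set C := s.toRight
  set X := F.image Prod.fst
  set Y := C.image Sigma.fst
  set D := E₀.filter fun e => e.1 ∈ S \ X ∧ e.2 ∈ Y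
  have hFE₀ : F ⊆ E₀ := fun e he => by simpa using hs (mem_toLeft.mp he)
  have hCT : C ⊆ slots m T := fun c hc => by simpa using hs (mem_toRight.mp hc)
  have hXS : X ⊆ S := by
    intro v hv
    obtain ⟨e, he, rfl⟩ := mem_image.mp hv
    exact hE₀ e (hFE₀ he)
  have hYT : Y ⊆ T := by
    intro v hv
    obtain ⟨c, hc, rfl⟩ := mem_image.mp hv
    exact (mem_slots.mp (hCT hc)).1
  have hCY : #C ≤ ∑ v ∈ Y, m v := by
    rw [← card_slots]
    exact card_le_card fun c hc =>
      mem_slots.mpr ⟨mem_image_of_mem _ hc, (mem_slots.mp (hCT hc)).2⟩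
  have hFD : Disjoint F D := by
    refine disjoint_left.mpr fun e heF heD => ?_
    exact (mem_sdiff.mp (mem_filter.mp heD).2.1).2 (mem_image_of_mem _ heF)
  have hnbr : (F ∪ D).disjSum (slots m X) ⊆ s.biUnion (gadgetNbr E₀ m) := by
    rintro (e | ⟨v, i⟩) hz <;> simp only [inl_mem_disjSum, inr_mem_disjSum] at hz <;>
      rw [mem_biUnion]
    · rcases mem_union.mp hz with heF | heD
      · exact ⟨.inl e, mem_toLeft.mp heF, mem_insert_self _ _⟩
      · obtain ⟨heE₀, -, hY⟩ := mem_filter.mp heD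
        obtain ⟨c, hc, hce⟩ := mem_image.mp hY
        exact ⟨.inr c, mem_toRight.mp hc, by simp [gadgetNbr, heE₀, hce]⟩
    · obtain ⟨hvX, hi⟩ := mem_slots.mp hz
      obtain ⟨e, heF, rfl⟩ := mem_image.mp hvX
      exact ⟨.inl e, mem_toLeft.mp heF, by simp [gadgetNbr, hi]⟩
  calc #s = #F + #C := card_toLeft_add_card_toRight.symm
    _ ≤ #F + (∑ v ∈ X, m v + #D) := by
        have hD : #D = edgesBetween E₀ (S \ X) Y := rfl
        have := hcond X hXS Y hYT
        omega
    _ = #((F ∪ D).disjSum (slots m X)) := by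
        rw [card_disjSum, card_union_of_disjoint hFD, card_slots]; ring
    _ ≤ _ := card_le_card hnbr

lemma exists_gadget_matching {S T : Finset α} {E₀ : Finset (α × α)} (hE₀ : ∀ e ∈ E₀, e.1 ∈ S)
    {m : α → ℕ}
    (hcond : ∀ X ⊆ S, ∀ Y ⊆ T, ∑ v ∈ Y, m v ≤ ∑ v ∈ X, m v + edgesBetween E₀ (S \ X) Y) :
    ∃ g : Vertex α → Vertex α, Set.InjOn g (E₀.disjSum (slots m T)) ∧
      ∀ a ∈ E₀.disjSum (slots m T), g a ∈ gadgetNbr E₀ m a := by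
  set A := E₀.disjSum (slots m T)
  obtain ⟨f, hf_inj, hf⟩ :=
    (all_card_le_biUnion_card_iff_exists_injective fun a : A => gadgetNbr E₀ m a).mp fun s => by
      have hs := card_le_card_biUnion_gadgetNbr hE₀ hcond (map_subtype_subset s)
      rwa [card_map, map_eq_image, image_biUnion] at hs
  refine ⟨fun a => if h : a ∈ A then f ⟨a, h⟩ else a, fun a ha b hb hab => ?_, fun a ha => ?_⟩
  · simp only [dif_pos (mem_coe.mp ha), dif_pos (mem_coe.mp hb)] at hab
    exact congrArg Subtype.val (hf_inj hab)
  · simpa only [dif_pos ha] using hf ⟨a, ha⟩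

variable {T : Finset α} {E₀ : Finset (α × α)} {m : α → ℕ} {g : Vertex α → Vertex α}

lemma degS_le_of_matching (hg_inj : Set.InjOn g (E₀.disjSum (slots m T)))
    (hg : ∀ a ∈ E₀.disjSum (slots m T), g a ∈ gadgetNbr E₀ m a) (v : α) :
    degS (E₀.filter fun e => g (.inl e) ≠ .inl e) v ≤ m v := by
  rw [degS, filter_filter]
  calc _ ≤ #((slots m {v}).map .inr) := by
        refine card_le_card_of_injOn (fun e => g (.inl e)) (fun e he => ?_)
          (fun e he e' he' h => ?_)
        · rw [mem_coe, mem_filter] at he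
          obtain ⟨heE₀, hne, rfl⟩ := he
          have := hg (.inl e) (inl_mem_disjSum.mpr heE₀)
          exact (mem_insert.mp this).resolve_left hne
        · rw [mem_coe, mem_filter] at he he'
          exact Sum.inl_injective (hg_inj (inl_mem_disjSum.mpr he.1)
            (inl_mem_disjSum.mpr he'.1) h)
    _ = m v := by rw [card_map, card_slots, sum_singleton]

lemma le_degT_of_matching (hg_inj : Set.InjOn g (E₀.disjSum (slots m T)))
    (hg : ∀ a ∈ E₀.disjSum (slots m T), g a ∈ gadgetNbr E₀ m a) {t : α} (ht : t ∈ T) :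
    m t ≤ degT (E₀.filter fun e => g (.inl e) ≠ .inl e) t := by
  have hA : ∀ c ∈ slots m {t}, Sum.inr c ∈ E₀.disjSum (slots m T) := fun c hc => by
    obtain ⟨rfl, hi⟩ : c.1 = t ∧ c.2 < m c.1 := by simpa using hc
    simp [hi, ht]
  calc m t = #(slots m {t}) := by rw [card_slots, sum_singleton]
    _ ≤ #((E₀.filter fun e => g (.inl e) ≠ .inl e ∧ e.2 = t).map .inl) := by
        refine card_le_card_of_injOn (fun c => g (.inr c)) (fun c hc => ?_)
          (fun c hc c' hc' h => Sum.inr_injective (hg_inj (hA c hc) (hA c' hc') h))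
        obtain ⟨e, he, hce⟩ := mem_map.mp (hg (.inr c) (hA c hc))
        rw [mem_filter] at he
        refine mem_coe.mpr (mem_map.mpr ⟨e, mem_filter.mpr ⟨he.1, fun hfix => ?_, ?_⟩, hce⟩)
        · -- if `e` stayed on its own copy, `g` would identify `.inl e` with the slot `.inr c`
          exact Sum.inl_ne_inr (hg_inj (inl_mem_disjSum.mpr he.1) (hA c hc) (hfix.trans hce))
        · exact he.2.trans (mem_singleton.mp (mem_slots.mp hc).1)
    _ = degT (E₀.filter fun e => g (.inl e) ≠ .inl e) t := by rw [card_map, degT, filter_filter]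

end Ore

lemma degS_eq_and_degT_eq_of_le {S T : Finset α} {E : Finset (α × α)} (hE : E ⊆ S ×ˢ T)
    {m : α → ℕ} (hsum : ∑ v ∈ S, m v = ∑ v ∈ T, m v)
    (hS : ∀ s ∈ S, degS E s ≤ m s) (hT : ∀ t ∈ T, m t ≤ degT E t) :
    (∀ s ∈ S, degS E s = m s) ∧ ∀ t ∈ T, degT E t = m t := by
  have hdeg : ∑ v ∈ S, degS E v = ∑ v ∈ T, degT E v := by
    rw [← card_eq_sum_degS hE, ← card_eq_sum_degT hE]
  have hS' := sum_le_sum hS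
  have hT' := sum_le_sum hT
  exact ⟨(sum_eq_sum_iff_of_le hS).mp (by omega),
    fun t ht => ((sum_eq_sum_iff_of_le hT).mp (by omega) t ht).symm⟩

theorem exists_subset_degS_degT_eq {S T : Finset α} {E₀ : Finset (α × α)}
    (hE₀ : E₀ ⊆ S ×ˢ T) {m : α → ℕ} (hsum : ∑ v ∈ S, m v = ∑ v ∈ T, m v)
    (hcond : ∀ X ⊆ S, ∀ Y ⊆ T, ∑ v ∈ Y, m v ≤ ∑ v ∈ X, m v + edgesBetween E₀ (S \ X) Y) :
    ∃ E ⊆ E₀, (∀ s ∈ S, degS E s = m s) ∧ ∀ t ∈ T, degT E t = m t := by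
  obtain ⟨g, hg_inj, hg⟩ :=
    Ore.exists_gadget_matching (fun e he => (mem_product.mp (hE₀ he)).1) hcond
  have hE : (E₀.filter fun e => g (.inl e) ≠ .inl e) ⊆ E₀ := filter_subset _ _
  exact ⟨_, hE, degS_eq_and_degT_eq_of_le (hE.trans hE₀) hsum
    (fun s _ => Ore.degS_le_of_matching hg_inj hg s) (fun t => Ore.le_degT_of_matching hg_inj hg)⟩

lemma nonneg_of_forall_sum_le {S T : Finset α} {E₀ : Finset (α × α)} {m : α → ℤ}
    (hsum : ∑ v ∈ S, m v = ∑ v ∈ T, m v)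
    (hcond : ∀ X ⊆ S, ∀ Y ⊆ T, ∑ v ∈ Y, m v ≤ ∑ v ∈ X, m v + edgesBetween E₀ (S \ X) Y) :
    ∀ v ∈ S ∪ T, 0 ≤ m v := by
  intro v hv
  rcases mem_union.mp hv with hv | hv
  · simpa [edgesBetween] using hcond {v} (singleton_subset_iff.mpr hv) ∅ (empty_subset _)
  · have := hcond S Subset.rfl (T.erase v) (erase_subset _ _)
    rw [hsum, ← sum_erase_add _ _ hv] at this
    simpa [edgesBetween] using this

theorem exists_subset_degS_degT_eq_int {S T : Finset α} {E₀ : Finset (α × α)}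
    (hE₀ : E₀ ⊆ S ×ˢ T) {m : α → ℤ} (hsum : ∑ v ∈ S, m v = ∑ v ∈ T, m v)
    (hcond : ∀ X ⊆ S, ∀ Y ⊆ T, ∑ v ∈ Y, m v ≤ ∑ v ∈ X, m v + edgesBetween E₀ (S \ X) Y) :
    ∃ E ⊆ E₀, (∀ s ∈ S, (degS E s : ℤ) = m s) ∧ ∀ t ∈ T, (degT E t : ℤ) = m t := by
  have hm : ∀ v ∈ S ∪ T, ((m v).toNat : ℤ) = m v := fun v hv =>
    Int.toNat_of_nonneg (nonneg_of_forall_sum_le hsum hcond v hv)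
  have hcast : ∀ X ⊆ S ∪ T, ((∑ v ∈ X, (m v).toNat : ℕ) : ℤ) = ∑ v ∈ X, m v := fun X hX => by
    push_cast
    exact sum_congr rfl fun v hv => hm v (hX hv)
  obtain ⟨E, hE, hS, hT⟩ := exists_subset_degS_degT_eq hE₀ (m := fun v => (m v).toNat)
    (by exact_mod_cast
      (hcast S subset_union_left).trans (hsum.trans (hcast T subset_union_right).symm))
    fun X hX Y hY => by
      have := hcond X hX Y hY
      rw [← hcast X (hX.trans subset_union_left), ← hcast Y (hY.trans subset_union_right)] at this
      exact_mod_cast this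
  exact ⟨E, hE, fun s hs => by rw [hS s hs, hm s (mem_union_left _ hs)],
    fun t ht => by rw [hT t ht, hm t (mem_union_right _ ht)]⟩

theorem ore_degree_specified_subgraph_general
    (S T : Finset α)
    (E₀ : Finset (α × α)) (hE₀ : E₀ ⊆ S ×ˢ T)
    (m : α → ℤ) (γ : ℤ)
    (hγS : ∑ v ∈ S, m v = γ) (hγT : ∑ v ∈ T, m v = γ) :
    (∃ E : Finset (α × α), E ⊆ E₀ ∧
        (∀ s ∈ S, (degS E s : ℤ) = m s) ∧ (∀ t ∈ T, (degT E t : ℤ) = m t))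
    ↔
    (∀ X ⊆ S, ∀ Y ⊆ T,
      (∑ v ∈ X, m v) + (∑ v ∈ Y, m v) - (edgesBetween E₀ X Y : ℤ) ≤ γ) := by
  subst hγS
  refine ⟨fun ⟨E, hE, hS, hT⟩ X hX Y hY => sum_add_sum_sub_edgesBetween_le hE hE₀ hS hT hX hY,
    fun h => exists_subset_degS_degT_eq_int hE₀ hγT.symm fun X hX Y hY => ?_⟩
  have := h (S \ X) sdiff_subset Y hY
  rw [← sum_sdiff hX] at this
  linarith

/-- **Ore's theorem (Theorem 10 of the paper).** A simple bigraph `G₀ = (S,T;E₀)` has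
a subgraph fitting a degree-specification `(m_S, m_T)` with
`m̃_S(S) = m̃_T(T) = γ` iff `m̃_S(X) + m̃_T(Y) − d_{G₀}(X,Y) ≤ γ` for every
`X ⊆ S` and `Y ⊆ T`. -/
theorem ore_degree_specified_subgraph
    (S T : Finset α) (hST : Disjoint S T) (hS : S.Nonempty) (hT : T.Nonempty)
    (E₀ : Finset (α × α)) (hE₀ : E₀ ⊆ S ×ˢ T)
    (m : α → ℤ) (γ : ℤ)
    (hγS : ∑ v ∈ S, m v = γ) (hγT : ∑ v ∈ T, m v = γ) :
    (∃ E : Finset (α × α), E ⊆ E₀ ∧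
        (∀ s ∈ S, (degS E s : ℤ) = m s) ∧ (∀ t ∈ T, (degT E t : ℤ) = m t))
    ↔
    (∀ X ⊆ S, ∀ Y ⊆ T,
      (∑ v ∈ X, m v) + (∑ v ∈ Y, m v) - (edgesBetween E₀ X Y : ℤ) ≤ γ) :=
  ore_degree_specified_subgraph_general S T E₀ hE₀ m γ hγS hγT
end
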